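/- arXiv:2604.21583 — 2 statements merged into one kernel-verified Lean document; each statement's English description precedes it below -/
import Mathlib

section
/- Let 0 < s < 1. Then there exists a constant C_s > 0 such that for every real L ≥ 1 and every k ∈ ℤ², ∑_{u ∈ ℤ², 1+|u|² ≤ L²} (1+|u+k|²)^{−s} (1+|u|²)^{−s} ≤ C_s · L^{2−2s} · ⟨k⟩^{−2s}. -/
/-!
Write `⟨v⟩² = 1 + |v|²`. The parallelogram law gives `⟨k⟩² ≤ 2 (⟨u + k⟩² + ⟨u⟩²)`, so the
larger of `⟨u + k⟩`, `⟨u⟩` is at least `⟨k⟩ / 2` and the summand is at most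
`4ˢ ⟨k⟩^{-2s} (⟨u + k⟩^{-2s} + ⟨u⟩^{-2s})`. On the disc `⟨u⟩ ≤ L` one has
`∑ ⟨u⟩^{-2s} ≲ L^{2-2s}`, by `⟨(a, b)⟩^{-2s} ≤ ⟨a⟩^{-s} ⟨b⟩^{-s}` and the one-dimensional bound
`∑_{n ≤ M} n^{-s} ≤ M^{1-s} / (1 - s)`. The shifted sum `∑ ⟨u + k⟩^{-2s}` exceeds this only by
the points of the shifted disc outside the disc, each contributing at most `L^{-2s}`, and there
are `O(L²)` of them.
-/

open scoped ENNReal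

/-- Squared Euclidean norm on `ℤ²`. -/
noncomputable def nsq (p : ℤ × ℤ) : ℝ := (p.1 : ℝ) ^ 2 + (p.2 : ℝ) ^ 2

open Finset Real

lemma rpow_one_sub_le_tangent {s x y : ℝ} (hs0 : 0 ≤ s) (hs1 : s ≤ 1) (hx : 0 ≤ x)
    (hy : 0 < y) :
    x ^ (1 - s) ≤ y ^ (1 - s) + (1 - s) * y ^ (-s) * (x - y) := by
  have amgm : x ^ (1 - s) * y ^ s ≤ (1 - s) * x + s * y :=
    geom_mean_le_arith_mean2_weighted (by linarith) hs0 hx hy.le (by ring)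
  have hys : y ^ s * y ^ (-s) = 1 := by rw [← rpow_add hy, add_neg_cancel, rpow_zero]
  have hy1s : y ^ (1 - s) = y * y ^ (-s) := by
    rw [sub_eq_add_neg, rpow_add hy, rpow_one]
  calc x ^ (1 - s) = x ^ (1 - s) * y ^ s * y ^ (-s) := by rw [mul_assoc, hys, mul_one]
    _ ≤ ((1 - s) * x + s * y) * y ^ (-s) := by gcongr
    _ = _ := by rw [hy1s]; ring

lemma sum_range_succ_rpow_neg_le {s : ℝ} (hs0 : 0 ≤ s) (hs1 : s < 1) (M : ℕ) :
    ∑ n ∈ range M, ((n : ℝ) + 1) ^ (-s) ≤ (M : ℝ) ^ (1 - s) / (1 - s) := by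
  have h1s : 0 < 1 - s := by linarith
  induction M with
  | zero => simp [zero_rpow h1s.ne']
  | succ M ih =>
    have tangent :=
      rpow_one_sub_le_tangent hs0 hs1.le M.cast_nonneg (by positivity : (0 : ℝ) < M + 1)
    rw [sum_range_succ, Nat.cast_succ, le_div_iff₀ h1s]
    rw [le_div_iff₀ h1s] at ih
    nlinarith

lemma one_add_add_rpow_neg_le {s a b : ℝ} (hs : 0 ≤ s) (ha : 0 ≤ a) (hb : 0 ≤ b) :
    (1 + a + b) ^ (-s) ≤ (1 + a) ^ (-(s / 2)) * (1 + b) ^ (-(s / 2)) := by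
  rw [← mul_rpow (by positivity) (by positivity),
    show -s = (2 : ℕ) * -(s / 2) by push_cast; ring, rpow_natCast_mul (by positivity)]
  exact rpow_le_rpow_of_nonpos (by positivity) (by nlinarith) (by linarith)

lemma rpow_neg_mul_rpow_neg_le {s A B : ℝ} (hs : 0 ≤ s) (hA : 0 < A) (hB : 0 < B) :
    A ^ (-s) * B ^ (-s) ≤ ((A + B) / 2) ^ (-s) * (A ^ (-s) + B ^ (-s)) := by
  wlog hBA : B ≤ A generalizing A B
  · rw [mul_comm, add_comm A, add_comm (A ^ (-s))]
    exact this hB hA (by linarith)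
  have hmax : A ^ (-s) ≤ ((A + B) / 2) ^ (-s) :=
    rpow_le_rpow_of_nonpos (by positivity) (by linarith) (by linarith)
  calc A ^ (-s) * B ^ (-s) ≤ ((A + B) / 2) ^ (-s) * B ^ (-s) := by gcongr
    _ ≤ _ := by gcongr; exact le_add_of_nonneg_left (by positivity)

lemma Finset.sum_comp_natAbs_le {M : Type*} [AddCommMonoid M] [PartialOrder M]
    [IsOrderedAddMonoid M] (s : Finset ℤ) {f : ℕ → M} (hf : ∀ n, 0 ≤ f n) :
    ∑ n ∈ s, f n.natAbs ≤ 2 • ∑ j ∈ s.image Int.natAbs, f j := by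
  rw [sum_comp, smul_sum]
  refine sum_le_sum fun j _ => nsmul_le_nsmul_left (hf j) ?_
  calc #{n ∈ s | n.natAbs = j} ≤ #({(j : ℤ), -(j : ℤ)} : Finset ℤ) :=
        card_le_card fun n hn => by
          have := (mem_filter.1 hn).2
          simp only [mem_insert, mem_singleton]
          omega
    _ ≤ 2 := card_le_two

lemma Finset.sum_le_sum_add_card_nsmul {ι M : Type*} [AddCommMonoid M] [PartialOrder M]
    [IsOrderedAddMonoid M] [DecidableEq ι] {S T : Finset ι} {f : ι → M} {c : M}
    (hf : ∀ i ∈ S, 0 ≤ f i) (hc : 0 ≤ c) (hfc : ∀ i ∈ T, i ∉ S → f i ≤ c) :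
    ∑ i ∈ T, f i ≤ ∑ i ∈ S, f i + #T • c := by
  rw [← sum_filter_add_sum_filter_not T (· ∈ S)]
  refine add_le_add (sum_le_sum_of_subset_of_nonneg (fun i hi => (mem_filter.1 hi).2)
    fun i hi _ => hf i hi) ?_
  calc ∑ i ∈ T with i ∉ S, f i ≤ #{i ∈ T | i ∉ S} • c :=
        sum_le_card_nsmul _ _ _ fun i hi => hfc i (mem_filter.1 hi).1 (mem_filter.1 hi).2
    _ ≤ #T • c := nsmul_le_nsmul_left hc (card_filter_le _ _)

lemma sum_Icc_one_add_sq_rpow_neg_le {s : ℝ} (hs0 : 0 ≤ s) (hs1 : s < 1) (M : ℕ) :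
    ∑ n ∈ Icc (-(M : ℤ)) M, (1 + (n : ℝ) ^ 2) ^ (-(s / 2)) ≤
      2 + 2 * (M : ℝ) ^ (1 - s) / (1 - s) := by
  have habs : ∀ n : ℤ,
      (1 + (n : ℝ) ^ 2) ^ (-(s / 2)) = (1 + (n.natAbs : ℝ) ^ 2) ^ (-(s / 2)) := by
    intro n; rw [Nat.cast_natAbs, Int.cast_abs, sq_abs]
  have himage : (Icc (-(M : ℤ)) M).image Int.natAbs ⊆ range (M + 1) := by
    intro j hj
    obtain ⟨n, hn, rfl⟩ := mem_image.1 hj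
    rw [mem_Icc] at hn
    rw [mem_range]
    omega
  have hterm : ∀ j : ℕ, (1 + ((j + 1 : ℕ) : ℝ) ^ 2) ^ (-(s / 2)) ≤ ((j : ℝ) + 1) ^ (-s) := by
    intro j
    rw [show -s = (2 : ℕ) * -(s / 2) by push_cast; ring, rpow_natCast_mul (by positivity)]
    exact rpow_le_rpow_of_nonpos (by positivity) (by push_cast; linarith) (by linarith)
  calc ∑ n ∈ Icc (-(M : ℤ)) M, (1 + (n : ℝ) ^ 2) ^ (-(s / 2))
      ≤ 2 • ∑ j ∈ range (M + 1), (1 + (j : ℝ) ^ 2) ^ (-(s / 2)) := by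
        simp_rw [habs]
        refine (sum_comp_natAbs_le (f := fun j : ℕ => (1 + (j : ℝ) ^ 2) ^ (-(s / 2))) _
          fun _ => by positivity).trans ?_
        exact nsmul_le_nsmul_right
          (sum_le_sum_of_subset_of_nonneg himage fun _ _ _ => by positivity) 2
    _ ≤ 2 * ((M : ℝ) ^ (1 - s) / (1 - s) + 1) := by
        rw [nsmul_eq_mul, sum_range_succ']
        refine mul_le_mul_of_nonneg_left (add_le_add ?_ (by simp)) zero_le_two
        exact (sum_le_sum fun j _ => hterm j).trans (sum_range_succ_rpow_neg_le hs0 hs1 M)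
    _ = _ := by ring

lemma nsq_nonneg (u : ℤ × ℤ) : 0 ≤ nsq u := by unfold nsq; positivity

lemma one_add_nsq_pos (u : ℤ × ℤ) : 0 < 1 + nsq u := by linarith [nsq_nonneg u]

lemma nsq_sub_le (u v : ℤ × ℤ) : nsq (u - v) ≤ 2 * (nsq u + nsq v) := by
  simp only [nsq, Prod.fst_sub, Prod.snd_sub, Int.cast_sub]
  nlinarith [sq_nonneg ((u.1 : ℝ) + v.1), sq_nonneg ((u.2 : ℝ) + v.2)]

lemma one_add_nsq_rpow_neg_mul_le {s : ℝ} (hs : 0 ≤ s) (u k : ℤ × ℤ) :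
    (1 + nsq (u + k)) ^ (-s) * (1 + nsq u) ^ (-s) ≤
      4 ^ s * (1 + nsq k) ^ (-s) * ((1 + nsq (u + k)) ^ (-s) + (1 + nsq u) ^ (-s)) := by
  have := nsq_nonneg u
  have := nsq_nonneg (u + k)
  have := nsq_nonneg k
  have hk : (1 + nsq k) / 4 ≤ ((1 + nsq (u + k)) + (1 + nsq u)) / 2 := by
    have := nsq_sub_le (u + k) u
    rw [add_sub_cancel_left] at this
    linarith
  refine (rpow_neg_mul_rpow_neg_le hs (by positivity) (by positivity)).trans
    (mul_le_mul_of_nonneg_right ?_ (by positivity))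
  calc (((1 + nsq (u + k)) + (1 + nsq u)) / 2) ^ (-s) ≤ ((1 + nsq k) / 4) ^ (-s) :=
        rpow_le_rpow_of_nonpos (by positivity) hk (by linarith)
    _ = 4 ^ s * (1 + nsq k) ^ (-s) := by
        rw [div_rpow (by positivity) (by norm_num), rpow_neg (by norm_num : (0 : ℝ) ≤ 4),
          div_inv_eq_mul, mul_comm]

noncomputable def latticeBall (L : ℝ) : Finset (ℤ × ℤ) :=
  {u ∈ Icc (-(⌊L⌋₊ : ℤ)) ⌊L⌋₊ ×ˢ Icc (-(⌊L⌋₊ : ℤ)) ⌊L⌋₊ | 1 + nsq u ≤ L ^ 2}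

lemma natAbs_le_floor_of_sq_le {L : ℝ} (hL : 0 ≤ L) {a : ℤ} (h : (a : ℝ) ^ 2 ≤ L ^ 2) :
    a.natAbs ≤ ⌊L⌋₊ := by
  refine Nat.le_floor ?_
  rw [Nat.cast_natAbs, Int.cast_abs]
  exact abs_le_of_sq_le_sq h hL

lemma mem_latticeBall {L : ℝ} (hL : 0 ≤ L) {u : ℤ × ℤ} :
    u ∈ latticeBall L ↔ 1 + nsq u ≤ L ^ 2 := by
  refine ⟨fun hu => (mem_filter.1 hu).2, fun hu => mem_filter.2 ⟨?_, hu⟩⟩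
  unfold nsq at hu
  have h1 := natAbs_le_floor_of_sq_le hL (a := u.1) (by nlinarith)
  have h2 := natAbs_le_floor_of_sq_le hL (a := u.2) (by nlinarith)
  simp only [mem_product, mem_Icc]
  omega

lemma card_latticeBall_le {L : ℝ} (hL : 0 ≤ L) :
    (#(latticeBall L) : ℝ) ≤ (2 * L + 1) ^ 2 := by
  have hM : (⌊L⌋₊ : ℝ) ≤ L := Nat.floor_le hL
  calc (#(latticeBall L) : ℝ) ≤ (2 * ⌊L⌋₊ + 1) ^ 2 := by
        refine (Nat.cast_le.2 (card_filter_le _ _)).trans_eq ?_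
        rw [card_product, Int.card_Icc,
          show ((⌊L⌋₊ : ℤ) + 1 - -⌊L⌋₊).toNat = 2 * ⌊L⌋₊ + 1 by omega]
        push_cast
        ring
    _ ≤ (2 * L + 1) ^ 2 := by gcongr

lemma tsum_subtype_eq_sum_latticeBall {M : Type*} [AddCommMonoid M] [TopologicalSpace M]
    {L : ℝ} (hL : 0 ≤ L) (f : ℤ × ℤ → M) :
    ∑' u : {u : ℤ × ℤ // 1 + nsq u ≤ L ^ 2}, f u = ∑ u ∈ latticeBall L, f u :=
  ((Equiv.subtypeEquivRight fun _ => (mem_latticeBall hL).symm).tsum_eq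
    (fun u : {u // u ∈ latticeBall L} => f u)).trans (Finset.tsum_subtype _ f)

lemma sum_latticeBall_rpow_neg_le {s L : ℝ} (hs0 : 0 ≤ s) (hs1 : s < 1) (hL : 1 ≤ L) :
    ∑ u ∈ latticeBall L, (1 + nsq u) ^ (-s) ≤ (4 / (1 - s)) ^ 2 * L ^ (2 - 2 * s) := by
  have h1s : 0 < 1 - s := by linarith
  set M := ⌊L⌋₊
  set g : ℤ → ℝ := fun n => (1 + (n : ℝ) ^ 2) ^ (-(s / 2))
  have hLs : 1 ≤ L ^ (1 - s) := one_le_rpow hL h1s.le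
  have hMs : (M : ℝ) ^ (1 - s) ≤ L ^ (1 - s) :=
    rpow_le_rpow M.cast_nonneg (Nat.floor_le (by linarith)) h1s.le
  have h1D : ∑ n ∈ Icc (-(M : ℤ)) M, g n ≤ 4 / (1 - s) * L ^ (1 - s) := by
    refine (sum_Icc_one_add_sq_rpow_neg_le hs0 hs1 M).trans ?_
    rw [div_mul_eq_mul_div, le_div_iff₀ h1s, add_mul, div_mul_cancel₀ _ h1s.ne']
    nlinarith
  calc ∑ u ∈ latticeBall L, (1 + nsq u) ^ (-s)
      ≤ ∑ u ∈ Icc (-(M : ℤ)) M ×ˢ Icc (-(M : ℤ)) M, (1 + nsq u) ^ (-s) :=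
        sum_le_sum_of_subset_of_nonneg (filter_subset _ _) fun u _ _ =>
          rpow_nonneg (one_add_nsq_pos u).le _
    _ ≤ ∑ u ∈ Icc (-(M : ℤ)) M ×ˢ Icc (-(M : ℤ)) M, g u.1 * g u.2 :=
        sum_le_sum fun u _ => by
          rw [nsq, ← add_assoc]
          exact one_add_add_rpow_neg_le hs0 (sq_nonneg _) (sq_nonneg _)
    _ = (∑ n ∈ Icc (-(M : ℤ)) M, g n) ^ 2 := by rw [sq, sum_mul_sum, sum_product]
    _ ≤ (4 / (1 - s) * L ^ (1 - s)) ^ 2 := by gcongr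
    _ = (4 / (1 - s)) ^ 2 * L ^ (2 - 2 * s) := by
        rw [mul_pow, ← rpow_mul_natCast (by linarith)]
        congr 2
        push_cast
        ring

lemma sum_latticeBall_shift_rpow_neg_le {s L : ℝ} (hs0 : 0 ≤ s) (hs1 : s < 1) (hL : 1 ≤ L)
    (k : ℤ × ℤ) :
    ∑ u ∈ latticeBall L, (1 + nsq (u + k)) ^ (-s) ≤
      ((4 / (1 - s)) ^ 2 + 9) * L ^ (2 - 2 * s) := by
  have hL0 : 0 < L := by linarith
  have hfar : ∀ v ∈ (latticeBall L).map (addRightEmbedding k), v ∉ latticeBall L →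
      (1 + nsq v) ^ (-s) ≤ (L ^ 2) ^ (-s) := fun v _ hv =>
    rpow_le_rpow_of_nonpos (by positivity)
      (le_of_lt (not_le.1 fun h => hv ((mem_latticeBall hL0.le).2 h))) (by linarith)
  have hcard : (#(latticeBall L) : ℝ) ≤ 9 * L ^ 2 :=
    (card_latticeBall_le hL0.le).trans (by nlinarith)
  have hpow : L ^ 2 * (L ^ 2) ^ (-s) = L ^ (2 - 2 * s) := by
    rw [← rpow_natCast_mul hL0.le, ← rpow_natCast, ← rpow_add hL0]
    congr 1
    push_cast
    ring
  have hshift : ∑ v ∈ (latticeBall L).map (addRightEmbedding k), (1 + nsq v) ^ (-s) =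
      ∑ u ∈ latticeBall L, (1 + nsq (u + k)) ^ (-s) := sum_map _ _ _
  rw [← hshift]
  refine (sum_le_sum_add_card_nsmul (fun v _ => rpow_nonneg (one_add_nsq_pos v).le _)
    (by positivity) hfar).trans ?_
  rw [card_map, nsmul_eq_mul, add_mul]
  refine add_le_add (sum_latticeBall_rpow_neg_le hs0 hs1 hL) ?_
  calc (#(latticeBall L) : ℝ) * (L ^ 2) ^ (-s) ≤ 9 * L ^ 2 * (L ^ 2) ^ (-s) := by gcongr
    _ = 9 * L ^ (2 - 2 * s) := by rw [mul_assoc, hpow]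

/-- Truncated convolution-kernel bound: for `0 < s < 1`,
`∑_{u : 1+|u|² ≤ L²} (1+|u+k|²)^{-s} (1+|u|²)^{-s} ≤ C_s L^{2-2s} ⟨k⟩^{-2s}`. -/
theorem truncated_convolution_kernel_bound (s : ℝ) (hs0 : 0 < s) (hs1 : s < 1) :
    ∃ C : ℝ, 0 < C ∧ ∀ L : ℝ, 1 ≤ L → ∀ k : ℤ × ℤ,
      ∑' u : {u : ℤ × ℤ // 1 + nsq u ≤ L ^ 2},
        ENNReal.ofReal ((1 + nsq (u.1 + k)) ^ (-s) * (1 + nsq u.1) ^ (-s)) ≤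
      ENNReal.ofReal (C * L ^ (2 - 2 * s) * (1 + nsq k) ^ (-s)) := by
  refine ⟨4 ^ s * (2 * (4 / (1 - s)) ^ 2 + 9), by positivity, fun L hL k => ?_⟩
  have := nsq_nonneg k
  rw [tsum_subtype_eq_sum_latticeBall (by linarith)
    fun u => ENNReal.ofReal ((1 + nsq (u + k)) ^ (-s) * (1 + nsq u) ^ (-s)),
    ← ENNReal.ofReal_sum_of_nonneg fun u _ =>
      mul_nonneg (rpow_nonneg (one_add_nsq_pos _).le _) (rpow_nonneg (one_add_nsq_pos _).le _)]
  refine ENNReal.ofReal_le_ofReal ?_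
  calc ∑ u ∈ latticeBall L, (1 + nsq (u + k)) ^ (-s) * (1 + nsq u) ^ (-s)
      ≤ ∑ u ∈ latticeBall L,
          4 ^ s * (1 + nsq k) ^ (-s) * ((1 + nsq (u + k)) ^ (-s) + (1 + nsq u) ^ (-s)) :=
        sum_le_sum fun u _ => one_add_nsq_rpow_neg_mul_le hs0.le u k
    _ = 4 ^ s * (1 + nsq k) ^ (-s) * (∑ u ∈ latticeBall L, (1 + nsq (u + k)) ^ (-s) +
          ∑ u ∈ latticeBall L, (1 + nsq u) ^ (-s)) := by rw [← mul_sum, sum_add_distrib]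
    _ ≤ 4 ^ s * (1 + nsq k) ^ (-s) * (((4 / (1 - s)) ^ 2 + 9) * L ^ (2 - 2 * s) +
          (4 / (1 - s)) ^ 2 * L ^ (2 - 2 * s)) := by
        gcongr
        · exact sum_latticeBall_shift_rpow_neg_le hs0.le hs1 hL k
        · exact sum_latticeBall_rpow_neg_le hs0.le hs1 hL
    _ = _ := by ring
end

section
/- For every t ∈ (0,1) there exists a constant C_t > 0 such that for every λ ∈ (0,1/2] and every r ∈ [1−t, 1], ∑_{p ∈ ℤ²} λ(1+|p|²) / (exp(r λ (1+|p|²)) − 1) ≤ C_t · λ^{−1}. -/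
open scoped ENNReal

/-!
From `exp y - 1 = 2 exp (y/2) sinh (y/2) ≥ y exp (y/2)`, the `p`-th term is at most
`r⁻¹ exp (-a |p|²)` with `a = rλ/2`. The Gaussian lattice sum factorises over the two
coordinates, and `a n² ≥ √a |n| - 1` bounds each factor by `e` times a two-sided geometric
series, which is `O(a^{-1/2})`. Altogether the sum is `O(1 / (r² λ))`, uniformly for `r ≥ 1 - t`.
-/

open Real

lemma div_exp_sub_one_le_exp_neg_half {y : ℝ} (hy : 0 < y) :
    y / (exp y - 1) ≤ exp (-(y / 2)) := by
  have hsinh : exp (-(y / 2)) * (exp y - 1) = 2 * sinh (y / 2) := by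
    rw [sinh_eq, mul_sub, ← exp_add]
    ring_nf
  rw [div_le_iff₀ (sub_pos.2 (one_lt_exp_iff.2 hy)), hsinh]
  linarith [self_le_sinh_iff.2 (half_pos hy).le]

lemma div_exp_mul_sub_one_le {r x : ℝ} (hr : 0 < r) (hx : 0 < x) :
    x / (exp (r * x) - 1) ≤ r⁻¹ * exp (-(r * x / 2)) := by
  rw [show x / (exp (r * x) - 1) = r⁻¹ * (r * x / (exp (r * x) - 1)) by field_simp]
  gcongr
  exact div_exp_sub_one_le_exp_neg_half (mul_pos hr hx)

lemma tsum_ofReal_exp_neg_mul_nat_le {s : ℝ} (hs : 0 < s) :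
    ∑' n : ℕ, ENNReal.ofReal (exp (-(s * n))) ≤ ENNReal.ofReal (1 + 1 / s) := by
  have hq : exp (-s) * (1 + s) ≤ 1 := by
    rw [exp_neg, inv_mul_le_iff₀ (exp_pos s)]
    linarith [add_one_le_exp s]
  have hgap : s / (1 + s) ≤ 1 - exp (-s) := by
    rw [div_le_iff₀ (by positivity)]
    linarith
  have hpos : 0 < 1 - exp (-s) := (by positivity : 0 < s / (1 + s)).trans_le hgap
  calc ∑' n : ℕ, ENNReal.ofReal (exp (-(s * n)))
      = ∑' n : ℕ, ENNReal.ofReal (exp (-s)) ^ n := by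
        refine tsum_congr fun n ↦ ?_
        rw [← ENNReal.ofReal_pow (exp_pos _).le, ← exp_nat_mul]
        ring_nf
    _ = ENNReal.ofReal (1 - exp (-s))⁻¹ := by
        rw [ENNReal.tsum_geometric, ENNReal.ofReal_inv_of_pos hpos,
          ENNReal.ofReal_sub _ (exp_pos _).le, ENNReal.ofReal_one]
    _ ≤ ENNReal.ofReal (1 + 1 / s) := by
        gcongr
        calc (1 - exp (-s))⁻¹ ≤ (s / (1 + s))⁻¹ := inv_anti₀ (by positivity) hgap
          _ = 1 + 1 / s := by field_simp; ring

lemma tsum_ofReal_exp_neg_mul_abs_int_le {s : ℝ} (hs : 0 < s) :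
    ∑' n : ℤ, ENNReal.ofReal (exp (-(s * |(n : ℝ)|))) ≤ ENNReal.ofReal (2 * (1 + 1 / s)) := by
  rw [tsum_of_nat_of_neg_add_one ENNReal.summable ENNReal.summable, two_mul,
    ENNReal.ofReal_add (by positivity) (by positivity)]
  have hneg : ∀ n : ℕ, ENNReal.ofReal (exp (-(s * |((-(n + 1) : ℤ) : ℝ)|))) ≤
      ENNReal.ofReal (exp (-(s * n))) := fun n ↦ by
    gcongr
    push_cast
    rw [abs_neg, abs_of_pos (by positivity)]
    linarith
  gcongr
  · simpa using tsum_ofReal_exp_neg_mul_nat_le hs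
  · exact (ENNReal.tsum_le_tsum hneg).trans (tsum_ofReal_exp_neg_mul_nat_le hs)

lemma tsum_ofReal_exp_neg_mul_sq_int_le {a : ℝ} (ha : 0 < a) :
    ∑' n : ℤ, ENNReal.ofReal (exp (-(a * (n : ℝ) ^ 2))) ≤
      ENNReal.ofReal (exp 1 * (2 * (1 + 1 / √a))) := by
  have hpt : ∀ n : ℤ, ENNReal.ofReal (exp (-(a * (n : ℝ) ^ 2))) ≤
      ENNReal.ofReal (exp 1) * ENNReal.ofReal (exp (-(√a * |(n : ℝ)|))) := fun n ↦ by
    rw [← ENNReal.ofReal_mul (exp_pos _).le, ← exp_add]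
    gcongr
    have hsq : a * (n : ℝ) ^ 2 = (√a * |(n : ℝ)|) ^ 2 := by
      rw [mul_pow, sq_sqrt ha.le, sq_abs]
    nlinarith [sq_nonneg (√a * |(n : ℝ)| - 1)]
  calc _ ≤ ∑' n : ℤ, ENNReal.ofReal (exp 1) * ENNReal.ofReal (exp (-(√a * |(n : ℝ)|))) :=
        ENNReal.tsum_le_tsum hpt
    _ ≤ ENNReal.ofReal (exp 1) * ENNReal.ofReal (2 * (1 + 1 / √a)) := by
        rw [ENNReal.tsum_mul_left]
        gcongr
        exact tsum_ofReal_exp_neg_mul_abs_int_le (sqrt_pos.2 ha)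
    _ = _ := (ENNReal.ofReal_mul (exp_pos _).le).symm

lemma tsum_ofReal_exp_neg_mul_nsq_le {a : ℝ} (ha : 0 < a) (ha1 : a ≤ 1) :
    ∑' p : ℤ × ℤ, ENNReal.ofReal (exp (-(a * nsq p))) ≤ ENNReal.ofReal (16 * exp 2 / a) := by
  set S := ∑' n : ℤ, ENNReal.ofReal (exp (-(a * (n : ℝ) ^ 2)))
  have hsplit : ∑' p : ℤ × ℤ, ENNReal.ofReal (exp (-(a * nsq p))) = S * S := by
    rw [ENNReal.tsum_prod', ← ENNReal.tsum_mul_right]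
    refine tsum_congr fun m ↦ ?_
    rw [← ENNReal.tsum_mul_left]
    refine tsum_congr fun n ↦ ?_
    rw [← ENNReal.ofReal_mul (exp_pos _).le, ← exp_add, nsq]
    ring_nf
  have hS : S ≤ ENNReal.ofReal (4 * exp 1 / √a) := by
    refine (tsum_ofReal_exp_neg_mul_sq_int_le ha).trans (ENNReal.ofReal_le_ofReal ?_)
    have hs : 0 < √a := sqrt_pos.2 ha
    have hinv : 1 ≤ 1 / √a := by rw [le_div_iff₀ hs, one_mul]; exact sqrt_le_one.2 ha1
    calc exp 1 * (2 * (1 + 1 / √a)) ≤ exp 1 * (2 * (1 / √a + 1 / √a)) := by gcongr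
      _ = 4 * exp 1 / √a := by ring
  calc _ = S * S := hsplit
    _ ≤ ENNReal.ofReal (4 * exp 1 / √a) * ENNReal.ofReal (4 * exp 1 / √a) := by gcongr
    _ = ENNReal.ofReal (16 * exp 2 / a) := by
        rw [← ENNReal.ofReal_mul (by positivity)]
        congr 1
        rw [show (2 : ℝ) = 1 + 1 by norm_num, exp_add]
        field_simp
        rw [sq_sqrt ha.le]
        ring

/-- Bound on the derivative of the log of the free partition function:
for fixed `t ∈ (0,1)`, uniformly in `λ ∈ (0,1/2]` and `r ∈ [1-t,1]`,
`∑_p λ h(p)/(e^{rλ h(p)} - 1) ≤ C_t λ^{-1}`. -/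
theorem free_partition_derivative_bound (t : ℝ) (ht : t ∈ Set.Ioo (0 : ℝ) 1) :
    ∃ C : ℝ, 0 < C ∧
      ∀ lam : ℝ, lam ∈ Set.Ioc (0 : ℝ) (1 / 2) → ∀ r : ℝ, r ∈ Set.Icc (1 - t) 1 →
        ∑' p : ℤ × ℤ,
          ENNReal.ofReal
            (lam * (1 + nsq p) / (Real.exp (r * lam * (1 + nsq p)) - 1)) ≤
        ENNReal.ofReal (C / lam) := by
  have h1t : 0 < 1 - t := sub_pos.2 ht.2
  refine ⟨32 * exp 2 / (1 - t) ^ 2, by positivity, ?_⟩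
  rintro lam ⟨hlam0, hlam⟩ r ⟨hr1, hr2⟩
  have hr0 : 0 < r := h1t.trans_le hr1
  set a := r * lam / 2 with ha_def
  have ha : 0 < a := by positivity
  have hterm (p : ℤ × ℤ) :
      lam * (1 + nsq p) / (exp (r * lam * (1 + nsq p)) - 1) ≤ r⁻¹ * exp (-(a * nsq p)) := by
    have hx : 0 < lam * (1 + nsq p) := by unfold nsq; positivity
    rw [mul_assoc]
    refine (div_exp_mul_sub_one_le hr0 hx).trans ?_
    have hsplit : a * nsq p + a = r * (lam * (1 + nsq p)) / 2 := by rw [ha_def]; ring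
    gcongr
    linarith
  calc _ ≤ ∑' p : ℤ × ℤ, ENNReal.ofReal r⁻¹ * ENNReal.ofReal (exp (-(a * nsq p))) :=
        ENNReal.tsum_le_tsum fun p ↦
          (ENNReal.ofReal_le_ofReal (hterm p)).trans_eq (ENNReal.ofReal_mul (by positivity))
    _ ≤ ENNReal.ofReal r⁻¹ * ENNReal.ofReal (16 * exp 2 / a) := by
        rw [ENNReal.tsum_mul_left]
        gcongr
        exact tsum_ofReal_exp_neg_mul_nsq_le ha (by nlinarith)
    _ ≤ ENNReal.ofReal (32 * exp 2 / (1 - t) ^ 2 / lam) := by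
        rw [← ENNReal.ofReal_mul (by positivity)]
        gcongr ENNReal.ofReal ?_
        rw [show r⁻¹ * (16 * exp 2 / a) = 32 * exp 2 / r ^ 2 / lam by field_simp; ring]
        gcongr
end
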